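/- Every unit of the ring R₁ = ℝ[X,Y]/(X²+Y²+1) is the image of a nonzero real number; that is, if u is a unit of R₁ then there exists a ∈ ℝ with a ≠ 0 and u = a·1. -/

import Mathlib

noncomputable section

/-- The coordinate ring `R₁ = ℝ[X,Y]/(X²+Y²+1)` of the affine open `U₁ = D₊(z)` of the
real anisotropic conic `C = V(x²+y²+z²) ⊂ ℙ²_ℝ`. -/
def R1 : Type :=
  MvPolynomial (Fin 2) ℝ ⧸
    Ideal.span {(MvPolynomial.X 0 : MvPolynomial (Fin 2) ℝ) ^ 2 + MvPolynomial.X 1 ^ 2 + 1}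

instance : CommRing R1 := Ideal.Quotient.commRing _
instance : Algebra ℝ R1 := Ideal.Quotient.algebra ℝ

namespace S4aux

open Polynomial

/-! We realize `R1` as the quadratic extension `ℝ[X][Y]/(Y² + (X²+1))` of `ℝ[X]`,
i.e. `AdjoinRoot g` for `g = Y² + C (X²+1)`.  The "norm" of an element
`p + q·root` is `p² + (X²+1)q² ∈ ℝ[X]`, and units must have unit norm, which by a
degree/positivity argument forces `q = 0` and `p` a nonzero constant. -/

def cc : Polynomial ℝ := X ^ 2 + 1

def g : Polynomial (Polynomial ℝ) := X ^ 2 + C cc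

lemma monic_g : g.Monic := by
  apply monic_X_pow_add
  calc degree (C cc) ≤ 0 := degree_C_le
  _ < 2 := by norm_num

lemma degree_g : g.degree = 2 := by
  rw [g, degree_add_eq_left_of_degree_lt, degree_X_pow]; · rfl
  rw [degree_X_pow]
  calc degree (C cc) ≤ 0 := degree_C_le
  _ < 2 := by norm_num

lemma root_sq : AdjoinRoot.root g ^ 2 = - AdjoinRoot.of g cc := by
  have h : eval₂ (AdjoinRoot.of g) (AdjoinRoot.root g) (X ^ 2 + C cc) = 0 := AdjoinRoot.eval₂_root g
  simp only [eval₂_add, eval₂_pow, eval₂_X, eval₂_C] at h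
  linear_combination h

/-- The conjugation `root ↦ -root` on `AdjoinRoot g`. -/
def sigma : AdjoinRoot g →+* AdjoinRoot g :=
  AdjoinRoot.lift (AdjoinRoot.of g) (-AdjoinRoot.root g) (by
    show eval₂ (AdjoinRoot.of g) (-AdjoinRoot.root g) (X ^ 2 + C cc) = 0
    simp only [eval₂_add, eval₂_pow, eval₂_X, eval₂_C, neg_sq]
    have h : eval₂ (AdjoinRoot.of g) (AdjoinRoot.root g) (X ^ 2 + C cc) = 0 := AdjoinRoot.eval₂_root g
    simp only [eval₂_add, eval₂_pow, eval₂_X, eval₂_C] at h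
    exact h)

@[simp] lemma sigma_of (p : Polynomial ℝ) : sigma (AdjoinRoot.of g p) = AdjoinRoot.of g p :=
  AdjoinRoot.lift_of _

@[simp] lemma sigma_root : sigma (AdjoinRoot.root g) = -AdjoinRoot.root g :=
  AdjoinRoot.lift_root _

lemma mul_sigma (p q : Polynomial ℝ) :
    (AdjoinRoot.of g p + AdjoinRoot.of g q * AdjoinRoot.root g) *
      sigma (AdjoinRoot.of g p + AdjoinRoot.of g q * AdjoinRoot.root g) =
    AdjoinRoot.of g (p ^ 2 + cc * q ^ 2) := by
  simp only [map_add, map_mul, sigma_of, sigma_root, map_pow]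
  linear_combination (-(AdjoinRoot.of g q ^ 2)) * root_sq

lemma exists_rep (w : AdjoinRoot g) :
    ∃ p q : Polynomial ℝ, w = AdjoinRoot.of g p + AdjoinRoot.of g q * AdjoinRoot.root g := by
  obtain ⟨F, rfl⟩ := AdjoinRoot.mk_surjective w
  refine ⟨(F %ₘ g).coeff 0, (F %ₘ g).coeff 1, ?_⟩
  have hmod : AdjoinRoot.mk g (F %ₘ g) = AdjoinRoot.mk g F := by
    conv_rhs => rw [← modByMonic_add_div F g]
    simp [map_add, map_mul, AdjoinRoot.mk_self]
  have hdeg : (F %ₘ g).degree ≤ 1 := by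
    have h := degree_modByMonic_lt F monic_g
    rw [degree_g] at h
    exact Order.le_of_lt_succ (by exact_mod_cast h)
  rw [← hmod]
  conv_lhs => rw [eq_X_add_C_of_degree_le_one hdeg]
  rw [map_add, map_mul]
  simp [AdjoinRoot.mk_X]
  ring

lemma of_inj {s t : Polynomial ℝ} (h : AdjoinRoot.of g s = AdjoinRoot.of g t) : s = t := by
  by_contra hne
  have h0 : AdjoinRoot.mk g (C (s - t)) = 0 := by
    rw [map_sub]
    simp only [AdjoinRoot.of, RingHom.comp_apply] at h
    rw [map_sub, h, sub_self]
  rw [AdjoinRoot.mk_eq_zero] at h0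
  have hC : (C (s - t) : Polynomial (Polynomial ℝ)) ≠ 0 :=
    C_ne_zero.mpr (sub_ne_zero_of_ne hne)
  have := degree_le_of_dvd h0 hC
  rw [degree_g, degree_C (sub_ne_zero_of_ne hne)] at this
  norm_num at this

/-- The key one-variable fact: `p² + (X²+1)q²` constant forces `q = 0`,
`p` constant. -/
lemma aux (p q : Polynomial ℝ) (b : ℝ) (hb : b ≠ 0) (h : p ^ 2 + cc * q ^ 2 = C b) :
    ∃ a : ℝ, a ≠ 0 ∧ q = 0 ∧ p = C a := by
  have hcc0 : cc ≠ 0 := by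
    intro hc
    have := congrArg (fun r => coeff r 0) hc
    simp [cc] at this
  have hq : q = 0 := by
    by_contra hq
    set r : Polynomial ℝ := cc * q ^ 2 with hr
    have hr0 : r ≠ 0 := mul_ne_zero hcc0 (pow_ne_zero _ hq)
    have hrd : r.natDegree = 2 + 2 * q.natDegree := by
      rw [hr, natDegree_mul hcc0 (pow_ne_zero _ hq), natDegree_pow]
      have : cc.natDegree = 2 := by rw [cc]; compute_degree!
      omega
    have hccm : cc.Monic := by
      apply monic_X_pow_add
      calc degree (1 : Polynomial ℝ) ≤ 0 := degree_one_le
      _ < 2 := by norm_num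
    have hrl : r.coeff r.natDegree = q.leadingCoeff ^ 2 := by
      rw [coeff_natDegree, hr, leadingCoeff_mul, leadingCoeff_pow, hccm.leadingCoeff, one_mul]
    have hql : q.leadingCoeff ≠ 0 := leadingCoeff_ne_zero.mpr hq
    rcases eq_or_ne p 0 with hp | hp
    · rw [hp, zero_pow two_ne_zero, zero_add] at h
      have := congrArg natDegree h
      rw [hrd, natDegree_C] at this
      omega
    · have hpd : (p ^ 2).natDegree = 2 * p.natDegree := by rw [natDegree_pow]
      have hpl : (p ^ 2).coeff (p ^ 2).natDegree = p.leadingCoeff ^ 2 := by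
        rw [coeff_natDegree, leadingCoeff_pow]
      have hpl0 : p.leadingCoeff ≠ 0 := leadingCoeff_ne_zero.mpr hp
      rcases lt_trichotomy (p ^ 2).natDegree r.natDegree with hlt | heq | hgt
      · have hc := congrArg (fun s => coeff s r.natDegree) h
        simp only [coeff_add, coeff_C, if_neg (show ¬ r.natDegree = 0 by omega)] at hc
        rw [coeff_eq_zero_of_natDegree_lt hlt, hrl, zero_add] at hc
        exact hql (pow_eq_zero_iff two_ne_zero |>.mp hc)
      · have hc := congrArg (fun s => coeff s r.natDegree) h
        simp only [coeff_add, coeff_C, if_neg (show ¬ r.natDegree = 0 by omega)] at hc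
        rw [← heq, hpl, heq, hrl] at hc
        have h1 : 0 < p.leadingCoeff ^ 2 :=
          lt_of_le_of_ne (sq_nonneg _) (Ne.symm (pow_ne_zero 2 hpl0))
        have h2 : 0 < q.leadingCoeff ^ 2 :=
          lt_of_le_of_ne (sq_nonneg _) (Ne.symm (pow_ne_zero 2 hql))
        linarith
      · have hc := congrArg (fun s => coeff s (p ^ 2).natDegree) h
        simp only [coeff_add, coeff_C, if_neg (show ¬ (p ^ 2).natDegree = 0 by omega)] at hc
        rw [coeff_eq_zero_of_natDegree_lt hgt, hpl, add_zero] at hc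
        exact hpl0 (pow_eq_zero_iff two_ne_zero |>.mp hc)
  rw [hq] at h
  rw [show p ^ 2 + cc * 0 ^ 2 = p ^ 2 by ring] at h
  have hp0 : p ≠ 0 := by
    intro hp; rw [hp] at h
    exact hb (by simpa using (congrArg (fun s => coeff s 0) h).symm)
  have hnd : p.natDegree = 0 := by
    have := congrArg natDegree h
    rw [natDegree_pow, natDegree_C] at this
    omega
  obtain ⟨a, rfl⟩ : ∃ a, p = C a := ⟨p.coeff 0, eq_C_of_natDegree_eq_zero hnd⟩
  refine ⟨a, ?_, hq, rfl⟩
  intro ha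
  rw [ha] at h
  simp at h
  exact hb (by simpa using (congrArg (fun s => coeff s 0) h).symm)

/-! ### The ring homomorphisms between `R1` and `AdjoinRoot g` -/

abbrev MvP := MvPolynomial (Fin 2) ℝ

def Igen : MvP := MvPolynomial.X 0 ^ 2 + MvPolynomial.X 1 ^ 2 + 1

def Ispan : Ideal MvP := Ideal.span {Igen}

def φ' : MvP →+* Polynomial (Polynomial ℝ) :=
  (MvPolynomial.aeval
    ![(Polynomial.C Polynomial.X : Polynomial (Polynomial ℝ)), Polynomial.X]).toRingHom

lemma φ'_gen : φ' Igen = g := by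
  simp [φ', Igen, g, cc]
  ring

def α : R1 →+* AdjoinRoot g :=
  Ideal.Quotient.lift Ispan ((AdjoinRoot.mk g).comp φ') (by
    intro a ha
    rw [Ispan, Ideal.mem_span_singleton] at ha
    obtain ⟨c, rfl⟩ := ha
    rw [RingHom.comp_apply, map_mul, map_mul, φ'_gen, AdjoinRoot.mk_self, zero_mul])

def mkR : MvP →+* R1 := Ideal.Quotient.mk Ispan

def f' : Polynomial ℝ →+* R1 :=
  eval₂RingHom (mkR.comp MvPolynomial.C) (mkR (MvPolynomial.X 0))

lemma mk_Igen : mkR Igen = 0 :=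
  Ideal.Quotient.eq_zero_iff_mem.mpr (Ideal.subset_span rfl)

lemma hβ : eval₂ f' (mkR (MvPolynomial.X 1)) g = 0 := by
  simp only [g, cc, eval₂_add, eval₂_pow, eval₂_X, eval₂_C, f', coe_eval₂RingHom,
    eval₂_one, eval₂_add, eval₂_pow, eval₂_X]
  have h := mk_Igen
  rw [Igen, map_add, map_add, map_pow, map_pow, map_one] at h
  linear_combination h

def β : AdjoinRoot g →+* R1 := AdjoinRoot.lift f' (mkR (MvPolynomial.X 1)) hβ

lemma beta_alpha : β.comp α = RingHom.id R1 := by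
  refine Ideal.Quotient.ringHom_ext ?_
  refine MvPolynomial.ringHom_ext (fun r => ?_) (fun i => ?_)
  · show β (α (mkR (MvPolynomial.C r))) = mkR (MvPolynomial.C r)
    rw [show α (mkR (MvPolynomial.C r)) = AdjoinRoot.mk g (φ' (MvPolynomial.C r)) from rfl]
    simp [α, β, φ', f', mkR, Ispan, Igen, AdjoinRoot.lift_of, AdjoinRoot.mk_C]
    rfl
  · fin_cases i <;>
    · show β (α (mkR (MvPolynomial.X _))) = mkR (MvPolynomial.X _)
      rw [show ∀ x, α (mkR x) = AdjoinRoot.mk g (φ' x) from fun _ => rfl]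
      simp [α, β, φ', f', mkR, Ispan, Igen, AdjoinRoot.lift_of, AdjoinRoot.lift_root,
        AdjoinRoot.mk_X, AdjoinRoot.mk_C]

lemma beta_of_C (a : ℝ) : β (AdjoinRoot.of g (C a)) = algebraMap ℝ R1 a := by
  rw [show AdjoinRoot.of g (C a) = AdjoinRoot.mk g (Polynomial.C (C a)) from rfl]
  simp [β, AdjoinRoot.lift_mk, f', mkR]
  rfl

end S4aux

open S4aux Polynomial

/-- Every unit of `R₁ = ℝ[X,Y]/(X²+Y²+1)` is the image of a nonzero
real number. -/
theorem statement_4 (u : R1ˣ) : ∃ a : ℝ, a ≠ 0 ∧ (u : R1) = algebraMap ℝ R1 a := by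
  set U := α (u : R1) with hUdef
  set V := α ((u⁻¹ : R1ˣ) : R1) with hVdef
  have hUV : U * V = 1 := by
    rw [hUdef, hVdef, ← map_mul]
    rw [show ((u : R1) * ((u⁻¹ : R1ˣ) : R1)) = 1 from u.mul_inv]
    exact map_one α
  obtain ⟨p, q, hU⟩ := exists_rep U
  obtain ⟨p', q', hV⟩ := exists_rep V
  have h1 : AdjoinRoot.of g ((p ^ 2 + cc * q ^ 2) * (p' ^ 2 + cc * q' ^ 2)) = AdjoinRoot.of g 1 := by
    rw [map_mul, ← mul_sigma p q, ← mul_sigma p' q', ← hU, ← hV, map_one]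
    calc (U * sigma U) * (V * sigma V) = (U * V) * sigma (U * V) := by rw [map_mul]; ring
    _ = 1 := by rw [hUV, map_one, mul_one]
  have h2 : (p ^ 2 + cc * q ^ 2) * (p' ^ 2 + cc * q' ^ 2) = 1 := of_inj h1
  have hu : IsUnit (p ^ 2 + cc * q ^ 2) := IsUnit.of_mul_eq_one _ h2
  rw [Polynomial.isUnit_iff] at hu
  obtain ⟨b, hbu, hbe⟩ := hu
  obtain ⟨a, ha, hq0, hpa⟩ := aux p q b hbu.ne_zero hbe.symm
  refine ⟨a, ha, ?_⟩
  have hUa : U = AdjoinRoot.of g (C a) := by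
    rw [hU, hq0, hpa, map_zero, zero_mul, add_zero]
  have := congrArg β hUa
  rw [hUdef, ← RingHom.comp_apply, beta_alpha, RingHom.id_apply, beta_of_C] at this
  exact this
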